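/- arXiv:1105.2033 — 3 statements merged into one kernel-verified Lean document; each statement's English description precedes it below -/
import Mathlib

section
/- Let l, T > 0, let α : [0,l] → ℝ be continuous with 0 < α(x) < 1 for all x ∈ (0,l), let k be continuously differentiable in x and continuous on Q̄_T = [0,l]×[0,T] with k(x,t) ≥ c₁ > 0, let q, f be continuous on Q̄_T with q(x,t) ≥ 0, and let u ∈ C^{2,1}(Q̄_T) satisfy ∂_{0t}^{α(x)} u = (k(x,t)u_x)_x − q(x,t)u + f(x,t) on (0,l)×(0,T], with u(0,t) = u(l,t) = 0 for 0 ≤ t ≤ T. Then for every t ∈ (0,T]: ∫_0^l ∂_{0t}^{α(x)} u²(x,t) dx + c₁ ‖u_x(·,t)‖₀² ≤ (l²/(2c₁)) ‖f(·,t)‖₀². -/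
open MeasureTheory intervalIntegral Set

/-- Caputo fractional derivative in time of order `β` of a function whose
time derivative is `ut`: `(1/Γ(1-β)) ∫_0^t ut(τ) (t-τ)^(-β) dτ`. -/
noncomputable def caputoT (β : ℝ) (ut : ℝ → ℝ) (t : ℝ) : ℝ :=
  (1 / Real.Gamma (1 - β)) * ∫ τ in (0:ℝ)..t, ut τ * (t - τ) ^ (-β)

/-- Riemann–Liouville fractional integral of order `β` of `g`:
`D^{-β} g(t) = (1/Γ(β)) ∫_0^t (t-s)^{β-1} g(s) ds`. -/
noncomputable def rlInt (β : ℝ) (g : ℝ → ℝ) (t : ℝ) : ℝ :=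
  (1 / Real.Gamma β) * ∫ s in (0:ℝ)..t, (t - s) ^ (β - 1) * g s

/-!
The heart of the matter is Alikhanov's inequality `∂^β (v²)(t) ≤ 2 v(t) ∂^β v(t)` for
`0 ≤ β < 1`. The difference of the two sides is `2/Γ(1-β)` times
`∫₀ᵗ v'(τ) (v(t) - v(τ)) (t - τ)^(-β) dτ`, and integrating by parts against `(v(t) - v(τ))²`
on `[0, s]` and letting `s → t` shows that this integral is nonnegative, because the kernel
`(t - τ)^(-β)` increases in `τ`.

Multiplying the equation by `2u` and integrating in `x` therefore bounds the Caputo term by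
`∫ 2u ((k u_x)_x + f) dx` (using `q ≥ 0`). Integrating by parts and using `k ≥ c₁` gives
`-2c₁ ‖u_x‖²`, and `∫ 2uf` is absorbed by Young's inequality together with the Friedrichs
inequality `‖u‖² ≤ (l²/2) ‖u_x‖²`. The Caputo term is integrable in `x` because it is
measurable and bounded uniformly in the order, `Γ` being bounded below on `(0, ∞)`.
-/

open Topology Filter

section Kernel

variable {t β : ℝ}

lemma intervalIntegrable_sub_rpow_neg (hβ : β < 1) :
    IntervalIntegrable (fun τ => (t - τ) ^ (-β)) volume 0 t := by
  simpa using (intervalIntegral.intervalIntegrable_rpow' (a := t - 0) (b := t - t)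
    (by linarith : (-1:ℝ) < -β)).comp_sub_left t

lemma integral_sub_rpow_neg (hβ : β < 1) :
    ∫ τ in (0:ℝ)..t, (t - τ) ^ (-β) = t ^ (1 - β) / (1 - β) := by
  rw [intervalIntegral.integral_comp_sub_left (fun s => s ^ (-β)) t, sub_self, sub_zero,
    integral_rpow (Or.inl (by linarith)), Real.zero_rpow (by linarith)]
  ring_nf

lemma intervalIntegrable_mul_sub_rpow_neg (ht : 0 ≤ t) (hβ : β < 1) {φ : ℝ → ℝ}
    (hφ : ContinuousOn φ (Icc 0 t)) :
    IntervalIntegrable (fun τ => φ τ * (t - τ) ^ (-β)) volume 0 t :=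
  (intervalIntegrable_sub_rpow_neg hβ).continuousOn_mul (by rwa [uIcc_of_le ht])

end Kernel

lemma tendsto_sub_rpow_neg_mul_sq_sub {t β d : ℝ} {v : ℝ → ℝ} {s : Set ℝ} (hβ : β < 2)
    (hs : s ⊆ Iio t) (hv : HasDerivWithinAt v d s t) :
    Tendsto (fun τ => (t - τ) ^ (-β) * (v t - v τ) ^ 2) (𝓝[s] t) (𝓝 0) := by
  have hslope : Tendsto (slope v t) (𝓝[s] t) (𝓝 d) := by
    have := hasDerivWithinAt_iff_tendsto_slope.mp hv
    rwa [sdiff_singleton_eq_self (fun h => lt_irrefl t (hs h))] at this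
  have hpow : Tendsto (fun τ => (t - τ) ^ (2 - β)) (𝓝[s] t) (𝓝 0) := by
    have h := ((Real.continuousAt_rpow_const 0 (2 - β) (Or.inr (by linarith))).tendsto.comp
      ((continuous_const.sub continuous_id).tendsto' t 0 (sub_self t)))
    rw [Real.zero_rpow (by linarith)] at h
    exact h.mono_left nhdsWithin_le_nhds
  have heq : ∀ τ ∈ s, slope v t τ ^ 2 * (t - τ) ^ (2 - β) = (t - τ) ^ (-β) * (v t - v τ) ^ 2 := by
    intro τ hτ
    have hpos : 0 < t - τ := sub_pos.mpr (hs hτ)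
    rw [slope_comm, slope_def_field, show (2 : ℝ) - β = 2 + -β by ring, Real.rpow_add hpos,
      Real.rpow_two]
    field_simp
  simpa using ((hslope.pow 2).mul hpow).congr' (eventually_nhdsWithin_of_forall heq)

lemma neg_two_mul_integral_deriv_mul_sub_le {s t β : ℝ} (hs : 0 ≤ s) (hst : s < t) (hβ : 0 ≤ β)
    {v v' : ℝ → ℝ} (hv : ∀ τ ∈ Icc 0 s, HasDerivWithinAt v (v' τ) (Icc 0 s) τ)
    (hv' : ContinuousOn v' (Icc 0 s)) :
    -(2 * ∫ τ in (0:ℝ)..s, v' τ * (v t - v τ) * (t - τ) ^ (-β)) ≤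
      (t - s) ^ (-β) * (v t - v s) ^ 2 := by
  have hpos : ∀ τ ∈ Icc 0 s, 0 < t - τ := fun τ hτ => by linarith [hτ.2]
  have hvc : ContinuousOn v (Icc 0 s) := fun τ hτ => (hv τ hτ).continuousWithinAt
  have hg : ∀ τ ∈ Icc 0 s, HasDerivWithinAt (fun τ => (t - τ) ^ (-β))
      (β * (t - τ) ^ (-β - 1)) (Icc 0 s) τ := fun τ hτ => by
    have := ((hasDerivAt_id' τ).const_sub t).rpow_const (p := -β) (Or.inl (hpos τ hτ).ne')
    exact (this.congr_deriv (by ring)).hasDerivWithinAt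
  have hw : ∀ τ ∈ Icc 0 s, HasDerivWithinAt (fun τ => (v t - v τ) ^ 2)
      (-2 * v' τ * (v t - v τ)) (Icc 0 s) τ := fun τ hτ =>
    (((hv τ hτ).const_sub (v t)).pow 2).congr_deriv (by ring)
  have hg'c : ContinuousOn (fun τ => β * (t - τ) ^ (-β - 1)) (Icc 0 s) :=
    continuousOn_const.mul ((continuousOn_const.sub continuousOn_id).rpow_const
      fun τ hτ => Or.inl (hpos τ hτ).ne')
  have hw'c : ContinuousOn (fun τ => -2 * v' τ * (v t - v τ)) (Icc 0 s) :=
    (continuousOn_const.mul hv').mul (continuousOn_const.sub hvc)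
  have hparts := intervalIntegral.integral_mul_deriv_eq_deriv_mul_of_hasDerivWithinAt
    (by rwa [uIcc_of_le hs]) (by rwa [uIcc_of_le hs])
    (hg'c.intervalIntegrable_of_Icc hs) (hw'c.intervalIntegrable_of_Icc hs)
  have hsplit : -(2 * ∫ τ in (0:ℝ)..s, v' τ * (v t - v τ) * (t - τ) ^ (-β)) =
      ∫ τ in (0:ℝ)..s, (t - τ) ^ (-β) * (-2 * v' τ * (v t - v τ)) := by
    rw [← intervalIntegral.integral_const_mul, ← intervalIntegral.integral_neg]
    congr 1 with τ
    ring
  have hboundary : 0 ≤ (t - 0) ^ (-β) * (v t - v 0) ^ 2 :=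
    mul_nonneg (Real.rpow_nonneg (by linarith) _) (sq_nonneg _)
  have hinterior : 0 ≤ ∫ τ in (0:ℝ)..s, β * (t - τ) ^ (-β - 1) * (v t - v τ) ^ 2 :=
    intervalIntegral.integral_nonneg hs fun τ hτ =>
      mul_nonneg (mul_nonneg hβ (Real.rpow_nonneg (hpos τ hτ).le _)) (sq_nonneg _)
  linarith

lemma integral_deriv_mul_sub_mul_sub_rpow_nonneg {t β : ℝ} (ht : 0 < t) (hβ₀ : 0 ≤ β)
    (hβ₁ : β < 1) {v v' : ℝ → ℝ} (hv : ∀ τ ∈ Icc 0 t, HasDerivWithinAt v (v' τ) (Icc 0 t) τ)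
    (hv' : ContinuousOn v' (Icc 0 t)) :
    0 ≤ ∫ τ in (0:ℝ)..t, v' τ * (v t - v τ) * (t - τ) ^ (-β) := by
  have hvc : ContinuousOn v (Icc 0 t) := fun τ hτ => (hv τ hτ).continuousWithinAt
  have hprimitive : Tendsto (fun s => ∫ τ in (0:ℝ)..s, v' τ * (v t - v τ) * (t - τ) ^ (-β))
      (𝓝[Ioo 0 t] t) (𝓝 (∫ τ in (0:ℝ)..t, v' τ * (v t - v τ) * (t - τ) ^ (-β))) := by
    have hcont := intervalIntegral.continuousOn_primitive_interval' (μ := volume)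
      (intervalIntegrable_mul_sub_rpow_neg (φ := fun τ => v' τ * (v t - v τ)) ht.le hβ₁
        (hv'.mul (continuousOn_const.sub hvc)))
      left_mem_uIcc
    rw [uIcc_of_le ht.le] at hcont
    exact (hcont t (right_mem_Icc.2 ht.le)).tendsto.mono_left
      (nhdsWithin_mono t Ioo_subset_Icc_self)
  have hboundary := tendsto_sub_rpow_neg_mul_sq_sub (by linarith) Ioo_subset_Iio_self
    ((hv t (right_mem_Icc.2 ht.le)).mono Ioo_subset_Icc_self)
  have htruncated : ∀ s ∈ Ioo 0 t,
      -(2 * ∫ τ in (0:ℝ)..s, v' τ * (v t - v τ) * (t - τ) ^ (-β)) ≤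
        (t - s) ^ (-β) * (v t - v s) ^ 2 := fun s hs =>
    neg_two_mul_integral_deriv_mul_sub_le hs.1.le hs.2 hβ₀
      (fun τ hτ => (hv τ ⟨hτ.1, hτ.2.trans hs.2.le⟩).mono (Icc_subset_Icc_right hs.2.le))
      (hv'.mono (Icc_subset_Icc_right hs.2.le))
  have : (𝓝[Ioo 0 t] t).NeBot := by rw [nhdsWithin_Ioo_eq_nhdsLT ht]; infer_instance
  have hlimit := le_of_tendsto_of_tendsto (hprimitive.const_mul 2).neg hboundary
    (eventually_nhdsWithin_of_forall htruncated)
  linarith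

lemma caputoT_two_mul_le {t β : ℝ} (ht : 0 < t) (hβ₀ : 0 ≤ β) (hβ₁ : β < 1) {v v' : ℝ → ℝ}
    (hv : ∀ τ ∈ Icc 0 t, HasDerivWithinAt v (v' τ) (Icc 0 t) τ)
    (hv' : ContinuousOn v' (Icc 0 t)) :
    caputoT β (fun τ => 2 * v τ * v' τ) t ≤ 2 * v t * caputoT β v' t := by
  have hvc : ContinuousOn v (Icc 0 t) := fun τ hτ => (hv τ hτ).continuousWithinAt
  have hsplit : ∫ τ in (0:ℝ)..t, 2 * v τ * v' τ * (t - τ) ^ (-β) =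
      2 * v t * (∫ τ in (0:ℝ)..t, v' τ * (t - τ) ^ (-β)) -
        2 * ∫ τ in (0:ℝ)..t, v' τ * (v t - v τ) * (t - τ) ^ (-β) := by
    rw [← intervalIntegral.integral_const_mul, ← intervalIntegral.integral_const_mul,
      ← intervalIntegral.integral_sub]
    · congr 1 with τ
      ring
    · exact (intervalIntegrable_mul_sub_rpow_neg ht.le hβ₁ hv').const_mul _
    · exact (intervalIntegrable_mul_sub_rpow_neg (φ := fun τ => v' τ * (v t - v τ)) ht.le hβ₁
        (hv'.mul (continuousOn_const.sub hvc))).const_mul _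
  have hΓ : 0 ≤ 1 / Real.Gamma (1 - β) := by
    have := Real.Gamma_pos_of_pos (by linarith : 0 < 1 - β)
    positivity
  have hnonneg := integral_deriv_mul_sub_mul_sub_rpow_nonneg ht hβ₀ hβ₁ hv hv'
  rw [caputoT, caputoT, hsplit]
  linarith [mul_nonneg hΓ hnonneg]

lemma abs_caputoT_le {t β M : ℝ} (ht : 0 ≤ t) (hβ : β < 1) {φ : ℝ → ℝ}
    (hφ : ∀ τ ∈ Ioc 0 t, |φ τ| ≤ M) :
    |caputoT β φ t| ≤ M * t ^ (1 - β) / Real.Gamma (2 - β) := by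
  have hΓ := Real.Gamma_pos_of_pos (by linarith : 0 < 1 - β)
  have hintegral : |∫ τ in (0:ℝ)..t, φ τ * (t - τ) ^ (-β)| ≤ M * (t ^ (1 - β) / (1 - β)) := by
    rw [← integral_sub_rpow_neg hβ, ← intervalIntegral.integral_const_mul, ← Real.norm_eq_abs]
    refine intervalIntegral.norm_integral_le_of_norm_le ht (ae_of_all _ fun τ hτ => ?_)
      ((intervalIntegrable_sub_rpow_neg hβ).const_mul M)
    have hkernel : 0 ≤ (t - τ) ^ (-β) := Real.rpow_nonneg (by linarith [hτ.2]) _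
    rw [Real.norm_eq_abs, abs_mul, abs_of_nonneg hkernel]
    exact mul_le_mul_of_nonneg_right (hφ τ hτ) hkernel
  have hΓ₂ : Real.Gamma (2 - β) = (1 - β) * Real.Gamma (1 - β) := by
    rw [← Real.Gamma_add_one (by linarith)]
    ring_nf
  rw [caputoT, abs_mul, abs_of_nonneg (by positivity), hΓ₂]
  calc 1 / Real.Gamma (1 - β) * |∫ τ in (0:ℝ)..t, φ τ * (t - τ) ^ (-β)|
      ≤ 1 / Real.Gamma (1 - β) * (M * (t ^ (1 - β) / (1 - β))) := by gcongr
    _ = M * t ^ (1 - β) / ((1 - β) * Real.Gamma (1 - β)) := by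
      field_simp [(by linarith : (1 - β) ≠ 0)]

lemma rpow_le_max_one {t γ : ℝ} (ht : 0 ≤ t) (hγ₀ : 0 ≤ γ) (hγ₁ : γ ≤ 1) :
    t ^ γ ≤ max 1 t := by
  rcases le_total t 1 with h | h
  · exact (Real.rpow_le_one ht h hγ₀).trans (le_max_left _ _)
  · exact (Real.rpow_le_self_of_one_le h hγ₁).trans (le_max_right _ _)

lemma aestronglyMeasurable_caputoT_order {a b t : ℝ} (ht : 0 < t) {α : ℝ → ℝ}
    (hα : ContinuousOn α (Ioo a b)) (hα₁ : ∀ x ∈ Ioo a b, α x < 1) {h : ℝ → ℝ → ℝ}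
    (hh : ContinuousOn (fun p : ℝ × ℝ => h p.1 p.2) (Ioo a b ×ˢ Ioo 0 t)) :
    AEStronglyMeasurable (fun x => caputoT (α x) (h x) t) (volume.restrict (Ioo a b)) := by
  have hΓ : ContinuousOn (fun x => 1 / Real.Gamma (1 - α x)) (Ioo a b) :=
    continuousOn_const.div
      (Real.differentiableOn_Gamma_Ioi.continuousOn.comp (continuousOn_const.sub hα)
        fun x hx => sub_pos.2 (hα₁ x hx))
      fun x hx => (Real.Gamma_pos_of_pos (sub_pos.2 (hα₁ x hx))).ne'
  have hintegrand : ContinuousOn (fun p : ℝ × ℝ => h p.1 p.2 * (t - p.2) ^ (-α p.1))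
      (Ioo a b ×ˢ Ioo 0 t) :=
    hh.mul ((continuousOn_const.sub continuousOn_snd).rpow
      (hα.comp continuousOn_fst fun p hp => hp.1).neg fun p hp => Or.inl (sub_pos.2 hp.2.2).ne')
  have hprod : AEStronglyMeasurable (fun p : ℝ × ℝ => h p.1 p.2 * (t - p.2) ^ (-α p.1))
      ((volume.restrict (Ioo a b)).prod (volume.restrict (Ioo 0 t))) := by
    rw [Measure.prod_restrict, ← Measure.volume_eq_prod]
    exact hintegrand.aestronglyMeasurable (measurableSet_Ioo.prod measurableSet_Ioo)
  have hIoo : (fun x => ∫ τ in (0:ℝ)..t, h x τ * (t - τ) ^ (-α x)) =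
      fun x => ∫ τ in Ioo 0 t, h x τ * (t - τ) ^ (-α x) := by
    ext x
    rw [intervalIntegral.integral_of_le ht.le, integral_Ioc_eq_integral_Ioo]
  unfold caputoT
  refine (hΓ.aestronglyMeasurable measurableSet_Ioo).mul ?_
  rw [hIoo]
  exact hprod.integral_prod_right'

lemma intervalIntegrable_caputoT_order {a b t : ℝ} (hab : a ≤ b) (ht : 0 < t) {α : ℝ → ℝ}
    (hα : ContinuousOn α (Ioo a b)) (hα₀ : ∀ x ∈ Ioo a b, 0 ≤ α x)
    (hα₁ : ∀ x ∈ Ioo a b, α x < 1) {h : ℝ → ℝ → ℝ}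
    (hh : ContinuousOn (fun p : ℝ × ℝ => h p.1 p.2) (Icc a b ×ˢ Icc 0 t)) :
    IntervalIntegrable (fun x => caputoT (α x) (h x) t) volume a b := by
  obtain ⟨M, hM⟩ := (isCompact_Icc.prod isCompact_Icc).exists_bound_of_continuousOn hh
  have hM₀ : 0 ≤ M := (norm_nonneg _).trans (hM (a, 0) ⟨left_mem_Icc.2 hab, left_mem_Icc.2 ht.le⟩)
  obtain ⟨x₀, hx₀, hmin⟩ := Real.exists_isMinOn_Gamma_Ioi
  have hΓ₀ : 0 < Real.Gamma x₀ := Real.Gamma_pos_of_pos (by linarith [hx₀.1])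
  rw [intervalIntegrable_iff_integrableOn_Ioo_of_le hab]
  refine IntegrableOn.of_bound measure_Ioo_lt_top
    (aestronglyMeasurable_caputoT_order ht hα hα₁
      (hh.mono (prod_mono Ioo_subset_Icc_self Ioo_subset_Icc_self)))
    (M * max 1 t / Real.Gamma x₀) (ae_restrict_of_forall_mem measurableSet_Ioo fun x hx => ?_)
  have hbound := abs_caputoT_le (M := M) (φ := h x) ht.le (hα₁ x hx) fun τ hτ =>
    hM (x, τ) ⟨Ioo_subset_Icc_self hx, Ioc_subset_Icc_self hτ⟩
  rw [Real.norm_eq_abs]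
  refine hbound.trans (div_le_div₀ (by positivity) ?_ hΓ₀ ?_)
  · exact mul_le_mul_of_nonneg_left
      (rpow_le_max_one ht.le (by linarith [hα₁ x hx]) (by linarith [hα₀ x hx])) hM₀
  · exact hmin (show 0 < 2 - α x by linarith [hα₁ x hx])

lemma sq_integral_le_mul_integral_sq {a b : ℝ} (hab : a ≤ b) {f : ℝ → ℝ}
    (hf : IntervalIntegrable f volume a b)
    (hf₂ : IntervalIntegrable (fun x => f x ^ 2) volume a b) :
    (∫ x in a..b, f x) ^ 2 ≤ (b - a) * ∫ x in a..b, f x ^ 2 := by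
  rcases hab.eq_or_lt with rfl | hlt
  · simp
  set mean := (∫ x in a..b, f x) / (b - a)
  have hexpand : ∫ x in a..b, (f x - mean) ^ 2 =
      (∫ x in a..b, f x ^ 2) - 2 * mean * (∫ x in a..b, f x) + mean ^ 2 * (b - a) := by
    have : (fun x => (f x - mean) ^ 2) = fun x => (f x ^ 2 - 2 * mean * f x) + mean ^ 2 := by
      ext x
      ring
    rw [this, intervalIntegral.integral_add (hf₂.sub (hf.const_mul _)) intervalIntegrable_const,
      intervalIntegral.integral_sub hf₂ (hf.const_mul _), intervalIntegral.integral_const_mul,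
      intervalIntegral.integral_const, smul_eq_mul]
    ring
  have hnonneg : 0 ≤ ∫ x in a..b, (f x - mean) ^ 2 :=
    intervalIntegral.integral_nonneg hab fun x _ => sq_nonneg _
  have hba : 0 < b - a := sub_pos.2 hlt
  rw [hexpand] at hnonneg
  simp only [mean] at hnonneg
  field_simp at hnonneg
  linarith

lemma integral_sq_le_of_hasDerivWithinAt {l : ℝ} (hl : 0 ≤ l) {v v' : ℝ → ℝ}
    (hv : ∀ x ∈ Icc 0 l, HasDerivWithinAt v (v' x) (Icc 0 l) x)
    (hv' : ContinuousOn v' (Icc 0 l)) (hv₀ : v 0 = 0) :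
    ∫ x in (0:ℝ)..l, v x ^ 2 ≤ l ^ 2 / 2 * ∫ x in (0:ℝ)..l, v' x ^ 2 := by
  have hvc : ContinuousOn v (Icc 0 l) := fun x hx => (hv x hx).continuousWithinAt
  have hpointwise : ∀ x ∈ Icc 0 l, v x ^ 2 ≤ x * ∫ y in (0:ℝ)..l, v' y ^ 2 := by
    intro x hx
    have hsub : Icc 0 x ⊆ Icc 0 l := Icc_subset_Icc_right hx.2
    have hv'x : IntervalIntegrable v' volume 0 x := (hv'.mono hsub).intervalIntegrable_of_Icc hx.1
    have hftc : ∫ y in (0:ℝ)..x, v' y = v x := by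
      rw [intervalIntegral.integral_eq_sub_of_hasDerivAt_of_le hx.1 (hvc.mono hsub)
        (fun y hy => (hv y (hsub (Ioo_subset_Icc_self hy))).hasDerivAt
          (Icc_mem_nhds hy.1 (hy.2.trans_le hx.2))) hv'x, hv₀, sub_zero]
    rw [← hftc]
    refine (sq_integral_le_mul_integral_sq hx.1 hv'x
      ((hv'.pow 2).mono hsub |>.intervalIntegrable_of_Icc hx.1)).trans ?_
    rw [sub_zero]
    exact mul_le_mul_of_nonneg_left (intervalIntegral.integral_mono_interval le_rfl hx.1 hx.2
      (ae_of_all _ fun y => sq_nonneg _) ((hv'.pow 2).intervalIntegrable_of_Icc hl)) hx.1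
  calc ∫ x in (0:ℝ)..l, v x ^ 2
      ≤ ∫ x in (0:ℝ)..l, x * ∫ y in (0:ℝ)..l, v' y ^ 2 :=
        intervalIntegral.integral_mono_on hl ((hvc.pow 2).intervalIntegrable_of_Icc hl)
          (continuousOn_id.mul continuousOn_const |>.intervalIntegrable_of_Icc hl) hpointwise
    _ = l ^ 2 / 2 * ∫ x in (0:ℝ)..l, v' x ^ 2 := by
        rw [intervalIntegral.integral_mul_const, integral_id]
        ring

lemma elliptic_energy_estimate {l c : ℝ} (hl : 0 < l) (hc : 0 < c) {v v' v'' k k' f : ℝ → ℝ}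
    (hv : ∀ x ∈ Icc 0 l, HasDerivWithinAt v (v' x) (Icc 0 l) x)
    (hv' : ∀ x ∈ Icc 0 l, HasDerivWithinAt v' (v'' x) (Icc 0 l) x)
    (hk : ∀ x ∈ Icc 0 l, HasDerivWithinAt k (k' x) (Icc 0 l) x)
    (hv''c : ContinuousOn v'' (Icc 0 l)) (hk'c : ContinuousOn k' (Icc 0 l))
    (hf : ContinuousOn f (Icc 0 l)) (hkc : ∀ x ∈ Icc 0 l, c ≤ k x) (hv₀ : v 0 = 0)
    (hvl : v l = 0) :
    (∫ x in (0:ℝ)..l, 2 * v x * (k' x * v' x + k x * v'' x + f x)) +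
        c * ∫ x in (0:ℝ)..l, v' x ^ 2 ≤
      l ^ 2 / (2 * c) * ∫ x in (0:ℝ)..l, f x ^ 2 := by
  have hvc : ContinuousOn v (Icc 0 l) := fun x hx => (hv x hx).continuousWithinAt
  have hv'c : ContinuousOn v' (Icc 0 l) := fun x hx => (hv' x hx).continuousWithinAt
  have hkc' : ContinuousOn k (Icc 0 l) := fun x hx => (hk x hx).continuousWithinAt
  have hint : ∀ {g : ℝ → ℝ}, ContinuousOn g (Icc 0 l) → IntervalIntegrable g volume 0 l :=
    fun hg => hg.intervalIntegrable_of_Icc hl.le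
  have hparts : ∫ x in (0:ℝ)..l, v x * (k' x * v' x + k x * v'' x) =
      -∫ x in (0:ℝ)..l, k x * v' x ^ 2 := by
    have := intervalIntegral.integral_mul_deriv_eq_deriv_mul_of_hasDerivWithinAt
      (u := v) (v := fun x => k x * v' x) (v' := fun x => k' x * v' x + k x * v'' x)
      (by rwa [uIcc_of_le hl.le])
      (by
        rw [uIcc_of_le hl.le]
        exact fun x hx => ((hk x hx).mul (hv' x hx)).congr_deriv (by ring))
      (hint hv'c) (hint (g := fun x => k' x * v' x + k x * v'' x)
        ((hk'c.mul hv'c).add (hkc'.mul hv''c)))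
    rw [this, hv₀, hvl, zero_mul, zero_mul, sub_zero, zero_sub]
    congr 2 with x
    ring
  have hcoercive : c * ∫ x in (0:ℝ)..l, v' x ^ 2 ≤ ∫ x in (0:ℝ)..l, k x * v' x ^ 2 := by
    rw [← intervalIntegral.integral_const_mul]
    exact intervalIntegral.integral_mono_on hl.le (hint (continuousOn_const.mul (hv'c.pow 2)))
      (hint (hkc'.mul (hv'c.pow 2)))
      fun x hx => mul_le_mul_of_nonneg_right (hkc x hx) (sq_nonneg _)
  set ε := 2 * c / l ^ 2 with hεdef
  have hε : 0 < ε := by positivity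
  have hyoung : ∫ x in (0:ℝ)..l, 2 * v x * f x ≤
      ε * (∫ x in (0:ℝ)..l, v x ^ 2) + ε⁻¹ * ∫ x in (0:ℝ)..l, f x ^ 2 := by
    rw [← intervalIntegral.integral_const_mul, ← intervalIntegral.integral_const_mul,
      ← intervalIntegral.integral_add (hint (g := fun x => ε * v x ^ 2)
        (continuousOn_const.mul (hvc.pow 2)))
        (hint (g := fun x => ε⁻¹ * f x ^ 2) (continuousOn_const.mul (hf.pow 2)))]
    exact intervalIntegral.integral_mono_on hl.le (hint ((continuousOn_const.mul hvc).mul hf))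
      (hint ((continuousOn_const.mul (hvc.pow 2)).add (continuousOn_const.mul (hf.pow 2))))
      fun x _ => two_mul_le_add_mul_sq hε
  have hfriedrichs : ε * ∫ x in (0:ℝ)..l, v x ^ 2 ≤ c * ∫ x in (0:ℝ)..l, v' x ^ 2 :=
    calc _ ≤ ε * (l ^ 2 / 2 * ∫ x in (0:ℝ)..l, v' x ^ 2) :=
          mul_le_mul_of_nonneg_left (integral_sq_le_of_hasDerivWithinAt hl.le hv hv'c hv₀) hε.le
      _ = _ := by rw [hεdef]; field_simp
  have hsplit : ∫ x in (0:ℝ)..l, 2 * v x * (k' x * v' x + k x * v'' x + f x) =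
      2 * (∫ x in (0:ℝ)..l, v x * (k' x * v' x + k x * v'' x)) +
        ∫ x in (0:ℝ)..l, 2 * v x * f x := by
    rw [← intervalIntegral.integral_const_mul, ← intervalIntegral.integral_add
      (hint (g := fun x => 2 * (v x * (k' x * v' x + k x * v'' x)))
        (continuousOn_const.mul (hvc.mul ((hk'c.mul hv'c).add (hkc'.mul hv''c)))))
      (hint (g := fun x => 2 * v x * f x) ((continuousOn_const.mul hvc).mul hf))]
    congr 1 with x
    ring
  rw [hεdef, inv_div] at hyoung
  rw [hsplit, hparts]
  linarith

theorem dirichlet_variable_order_pointwise_estimate_general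
    (l T c₁ : ℝ) (hl : 0 < l) (hc₁ : 0 < c₁)
    (α : ℝ → ℝ) (hαc : ContinuousOn α (Icc 0 l))
    (hα : ∀ x ∈ Ioo (0:ℝ) l, 0 < α x ∧ α x < 1)
    (k kx q f : ℝ → ℝ → ℝ)
    (hkx : ContinuousOn (fun p : ℝ × ℝ => kx p.1 p.2) (Icc 0 l ×ˢ Icc 0 T))
    (hkd : ∀ t ∈ Icc (0:ℝ) T, ∀ x ∈ Icc (0:ℝ) l,
      HasDerivWithinAt (fun z => k z t) (kx x t) (Icc 0 l) x)
    (hkc₁ : ∀ x ∈ Icc (0:ℝ) l, ∀ t ∈ Icc (0:ℝ) T, c₁ ≤ k x t)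
    (hq0 : ∀ x ∈ Icc (0:ℝ) l, ∀ t ∈ Icc (0:ℝ) T, 0 ≤ q x t)
    (hf : ContinuousOn (fun p : ℝ × ℝ => f p.1 p.2) (Icc 0 l ×ˢ Icc 0 T))
    (u ux uxx ut : ℝ → ℝ → ℝ)
    -- u ∈ C^{2,1}(Q̄_T):
    (hu : ContinuousOn (fun p : ℝ × ℝ => u p.1 p.2) (Icc 0 l ×ˢ Icc 0 T))
    (huxx : ContinuousOn (fun p : ℝ × ℝ => uxx p.1 p.2) (Icc 0 l ×ˢ Icc 0 T))
    (hut : ContinuousOn (fun p : ℝ × ℝ => ut p.1 p.2) (Icc 0 l ×ˢ Icc 0 T))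
    (huxd : ∀ t ∈ Icc (0:ℝ) T, ∀ x ∈ Icc (0:ℝ) l,
      HasDerivWithinAt (fun z => u z t) (ux x t) (Icc 0 l) x)
    (huxxd : ∀ t ∈ Icc (0:ℝ) T, ∀ x ∈ Icc (0:ℝ) l,
      HasDerivWithinAt (fun z => ux z t) (uxx x t) (Icc 0 l) x)
    (hutd : ∀ x ∈ Icc (0:ℝ) l, ∀ t ∈ Icc (0:ℝ) T,
      HasDerivWithinAt (fun s => u x s) (ut x t) (Icc 0 T) t)
    -- the equation:
    (heq : ∀ x ∈ Ioo (0:ℝ) l, ∀ t ∈ Ioc (0:ℝ) T,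
      caputoT (α x) (fun τ => ut x τ) t =
        (kx x t * ux x t + k x t * uxx x t) - q x t * u x t + f x t)
    -- boundary and initial conditions:
    (hbc : ∀ t ∈ Icc (0:ℝ) T, u 0 t = 0 ∧ u l t = 0) :
    ∀ t ∈ Ioc (0:ℝ) T,
      (∫ x in (0:ℝ)..l, caputoT (α x) (fun s => 2 * u x s * ut x s) t) +
        c₁ * (∫ x in (0:ℝ)..l, (ux x t) ^ 2) ≤
      l ^ 2 / (2 * c₁) * (∫ x in (0:ℝ)..l, (f x t) ^ 2) := by
  rintro t ⟨ht₀, htT⟩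
  have ht : t ∈ Icc 0 T := ⟨ht₀.le, htT⟩
  have hsub : Icc 0 t ⊆ Icc 0 T := Icc_subset_Icc_right htT
  have hcaputo : ∀ x ∈ Ioo 0 l, caputoT (α x) (fun s => 2 * u x s * ut x s) t ≤
      2 * u x t * (kx x t * ux x t + k x t * uxx x t + f x t) := by
    intro x hx
    have hx' := Ioo_subset_Icc_self hx
    calc _ ≤ 2 * u x t * caputoT (α x) (fun s => ut x s) t :=
          caputoT_two_mul_le ht₀ (hα x hx).1.le (hα x hx).2
            (fun τ hτ => (hutd x hx' τ (hsub hτ)).mono hsub) ((hut.uncurry_left x hx').mono hsub)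
      _ ≤ _ := by
        rw [heq x hx t ⟨ht₀, htT⟩]
        linarith [mul_nonneg (hq0 x hx' t ht) (sq_nonneg (u x t))]
  have hintegrable := intervalIntegrable_caputoT_order hl.le ht₀ (hαc.mono Ioo_subset_Icc_self)
    (fun x hx => (hα x hx).1.le) (fun x hx => (hα x hx).2)
    (h := fun x s => 2 * u x s * ut x s)
    (((continuousOn_const.mul hu).mul hut).mono (prod_mono subset_rfl hsub))
  have hux : ContinuousOn (fun x => ux x t) (Icc 0 l) := fun x hx =>
    (huxxd t ht x hx).continuousWithinAt
  have hk : ContinuousOn (fun x => k x t) (Icc 0 l) := fun x hx =>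
    (hkd t ht x hx).continuousWithinAt
  calc _ ≤ (∫ x in (0:ℝ)..l, 2 * u x t * (kx x t * ux x t + k x t * uxx x t + f x t)) +
        c₁ * ∫ x in (0:ℝ)..l, ux x t ^ 2 := by
        gcongr
        refine intervalIntegral.integral_mono_on_of_le_Ioo hl.le hintegrable ?_ hcaputo
        exact ((continuousOn_const.mul (hu.uncurry_right t ht)).mul
          ((((hkx.uncurry_right t ht).mul hux).add (hk.mul (huxx.uncurry_right t ht))).add
            (hf.uncurry_right t ht))).intervalIntegrable_of_Icc hl.le
    _ ≤ _ := elliptic_energy_estimate hl hc₁ (huxd t ht) (huxxd t ht) (hkd t ht)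
        (huxx.uncurry_right t ht) (hkx.uncurry_right t ht) (hf.uncurry_right t ht)
        (fun x hx => hkc₁ x hx t ht) (hbc t ht).1 (hbc t ht).2

/-- Pointwise-in-time energy inequality (8)–(9) for the Dirichlet problem for
the variable order diffusion equation `∂_{0t}^{α(x)} u = (k u_x)_x − q u + f`:
`∫_0^l ∂_{0t}^{α(x)} u² dx + c₁‖u_x‖₀² ≤ (l²/(2c₁))‖f‖₀²`. -/
theorem dirichlet_variable_order_pointwise_estimate
    (l T c₁ : ℝ) (hl : 0 < l) (hT : 0 < T) (hc₁ : 0 < c₁)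
    (α : ℝ → ℝ) (hαc : ContinuousOn α (Icc 0 l))
    (hα : ∀ x ∈ Ioo (0:ℝ) l, 0 < α x ∧ α x < 1)
    (k kx q f : ℝ → ℝ → ℝ)
    (hk : ContinuousOn (fun p : ℝ × ℝ => k p.1 p.2) (Icc 0 l ×ˢ Icc 0 T))
    (hkx : ContinuousOn (fun p : ℝ × ℝ => kx p.1 p.2) (Icc 0 l ×ˢ Icc 0 T))
    (hkd : ∀ t ∈ Icc (0:ℝ) T, ∀ x ∈ Icc (0:ℝ) l,
      HasDerivWithinAt (fun z => k z t) (kx x t) (Icc 0 l) x)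
    (hkc₁ : ∀ x ∈ Icc (0:ℝ) l, ∀ t ∈ Icc (0:ℝ) T, c₁ ≤ k x t)
    (hq : ContinuousOn (fun p : ℝ × ℝ => q p.1 p.2) (Icc 0 l ×ˢ Icc 0 T))
    (hq0 : ∀ x ∈ Icc (0:ℝ) l, ∀ t ∈ Icc (0:ℝ) T, 0 ≤ q x t)
    (hf : ContinuousOn (fun p : ℝ × ℝ => f p.1 p.2) (Icc 0 l ×ˢ Icc 0 T))
    (u ux uxx ut : ℝ → ℝ → ℝ)
    -- u ∈ C^{2,1}(Q̄_T):
    (hu : ContinuousOn (fun p : ℝ × ℝ => u p.1 p.2) (Icc 0 l ×ˢ Icc 0 T))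
    (hux : ContinuousOn (fun p : ℝ × ℝ => ux p.1 p.2) (Icc 0 l ×ˢ Icc 0 T))
    (huxx : ContinuousOn (fun p : ℝ × ℝ => uxx p.1 p.2) (Icc 0 l ×ˢ Icc 0 T))
    (hut : ContinuousOn (fun p : ℝ × ℝ => ut p.1 p.2) (Icc 0 l ×ˢ Icc 0 T))
    (huxd : ∀ t ∈ Icc (0:ℝ) T, ∀ x ∈ Icc (0:ℝ) l,
      HasDerivWithinAt (fun z => u z t) (ux x t) (Icc 0 l) x)
    (huxxd : ∀ t ∈ Icc (0:ℝ) T, ∀ x ∈ Icc (0:ℝ) l,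
      HasDerivWithinAt (fun z => ux z t) (uxx x t) (Icc 0 l) x)
    (hutd : ∀ x ∈ Icc (0:ℝ) l, ∀ t ∈ Icc (0:ℝ) T,
      HasDerivWithinAt (fun s => u x s) (ut x t) (Icc 0 T) t)
    -- the equation:
    (heq : ∀ x ∈ Ioo (0:ℝ) l, ∀ t ∈ Ioc (0:ℝ) T,
      caputoT (α x) (fun τ => ut x τ) t =
        (kx x t * ux x t + k x t * uxx x t) - q x t * u x t + f x t)
    -- boundary and initial conditions:
    (hbc : ∀ t ∈ Icc (0:ℝ) T, u 0 t = 0 ∧ u l t = 0) :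
    ∀ t ∈ Ioc (0:ℝ) T,
      (∫ x in (0:ℝ)..l, caputoT (α x) (fun s => 2 * u x s * ut x s) t) +
        c₁ * (∫ x in (0:ℝ)..l, (ux x t) ^ 2) ≤
      l ^ 2 / (2 * c₁) * (∫ x in (0:ℝ)..l, (f x t) ^ 2) :=
  dirichlet_variable_order_pointwise_estimate_general l T c₁ hl hc₁ α hαc hα k kx q f hkx hkd hkc₁
    hq0 hf u ux uxx ut hu huxx hut huxd huxxd hutd heq hbc
end

section
/- Let 0 < α < 1, τ > 0, and let y : ℕ → ℝ be any sequence (a grid function on the grid t_j = jτ). Then for every j ≥ 0: y^{j+1} · Δ_{0t_j}^α y ≥ (1/2) · Δ_{0t_j}^α (y²) + (τ^α Γ(2−α)/2) · (Δ_{0t_j}^α y)², where Δ_{0t_j}^α (y²) denotes the same discrete operator applied to the sequence j ↦ (y^j)². -/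
/-!
Write `Δ^α y = Γ(2-α)⁻¹ Σ_{s ≤ j} c_s (y^{s+1} - y^s)` with weights `c_s`. Concavity of
`t ↦ t^{1-α}` makes `c_s` nondecreasing in `s`, and the last weight is `c_j = τ^{-α}`.
For any positive nondecreasing weights, `F_n = y^{n+1} S_n - ½ S'_n` (with `S_n`, `S'_n` the
weighted sums of the increments of `y` and `y²`) satisfies `F_{n+1} = F_n + x S_n + ½ c_{n+1} x²`,
`x = y^{n+2} - y^{n+1}`, and an induction on `n` gives `F_n ≥ S_n² / (2 c_n)`.
-/

/-- The discrete analogue of the Caputo fractional derivative of order `α`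
on the uniform grid `t_j = jτ`:
`Δ_{0t_j}^α y = (1/Γ(2-α)) Σ_{s=0}^{j} (t_{j-s+1}^{1-α} − t_{j-s}^{1-α}) (y^{s+1} − y^s)/τ`. -/
noncomputable def dCaputo (α τ : ℝ) (y : ℕ → ℝ) (j : ℕ) : ℝ :=
  (1 / Real.Gamma (2 - α)) *
    ∑ s ∈ Finset.range (j + 1),
      (((((j : ℕ) - s + 1 : ℕ) : ℝ) * τ) ^ (1 - α) -
        ((((j : ℕ) - s : ℕ) : ℝ) * τ) ^ (1 - α)) * (y (s + 1) - y s) / τ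

open Finset

lemma Real.rpow_add_two_mul_sub_rpow_le {p : ℝ} (hp₀ : 0 ≤ p) (hp₁ : p ≤ 1) {a h : ℝ}
    (ha : 0 ≤ a) (hh : 0 ≤ h) :
    (a + 2 * h) ^ p - (a + h) ^ p ≤ (a + h) ^ p - a ^ p := by
  have hmid := (Real.concaveOn_rpow hp₀ hp₁).2 (Set.mem_Ici.2 ha)
    (Set.mem_Ici.2 (by positivity : 0 ≤ a + 2 * h)) (by norm_num : (0 : ℝ) ≤ 1 / 2)
    (by norm_num : (0 : ℝ) ≤ 1 / 2) (by norm_num)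
  have hcenter : 1 / 2 * a + 1 / 2 * (a + 2 * h) = a + h := by ring
  simp only [smul_eq_mul, hcenter] at hmid
  linarith

lemma sq_sum_div_le_of_monotone (c y : ℕ → ℝ) (hc₀ : 0 < c 0) (hc : Monotone c) (n : ℕ) :
    (∑ s ∈ range (n + 1), c s * (y (s + 1) - y s)) ^ 2 / (2 * c n) ≤
      y (n + 1) * ∑ s ∈ range (n + 1), c s * (y (s + 1) - y s) -
        1 / 2 * ∑ s ∈ range (n + 1), c s * (y (s + 1) ^ 2 - y s ^ 2) := by
  induction n with
  | zero =>
    simp only [zero_add, sum_range_one]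
    refine le_of_eq ?_
    field_simp
    ring
  | succ n ih =>
    have hcn : 0 < c n := hc₀.trans_le (hc (Nat.zero_le n))
    have hcn₁ : 0 < c (n + 1) := hc₀.trans_le (hc (Nat.zero_le _))
    rw [sum_range_succ, sum_range_succ _ (n + 1)]
    set S := ∑ s ∈ range (n + 1), c s * (y (s + 1) - y s)
    set x := y (n + 1 + 1) - y (n + 1)
    calc (S + c (n + 1) * x) ^ 2 / (2 * c (n + 1))
        = S ^ 2 / (2 * c (n + 1)) + x * S + 1 / 2 * c (n + 1) * x ^ 2 := by
          field_simp; ring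
      _ ≤ S ^ 2 / (2 * c n) + x * S + 1 / 2 * c (n + 1) * x ^ 2 := by
          gcongr; exact hc n.le_succ
      _ ≤ y (n + 1) * S - 1 / 2 * ∑ s ∈ range (n + 1), c s * (y (s + 1) ^ 2 - y s ^ 2) +
            x * S + 1 / 2 * c (n + 1) * x ^ 2 := by
          gcongr
      _ = _ := by ring

section CaputoWeight

variable {α τ : ℝ}

noncomputable def caputoWeight (α τ : ℝ) (j s : ℕ) : ℝ :=
  ((((j - s + 1 : ℕ) : ℝ) * τ) ^ (1 - α) - (((j - s : ℕ) : ℝ) * τ) ^ (1 - α)) / τ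

lemma dCaputo_eq_inv_gamma_mul_sum (y : ℕ → ℝ) (j : ℕ) :
    dCaputo α τ y j =
      (Real.Gamma (2 - α))⁻¹ * ∑ s ∈ range (j + 1), caputoWeight α τ j s * (y (s + 1) - y s) := by
  rw [dCaputo, one_div]
  congr 1
  refine sum_congr rfl fun s _ => ?_
  rw [caputoWeight, div_mul_eq_mul_div]

lemma caputoWeight_pos (hα : α < 1) (hτ : 0 < τ) (j s : ℕ) : 0 < caputoWeight α τ j s := by
  refine div_pos (sub_pos.2 (Real.rpow_lt_rpow (by positivity) ?_ (by linarith))) hτ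
  gcongr
  exact_mod_cast (j - s).lt_succ_self

lemma caputoWeight_self (hα : α ≠ 1) (hτ : 0 < τ) (j : ℕ) : caputoWeight α τ j j = (τ ^ α)⁻¹ := by
  rw [caputoWeight, Nat.sub_self, Nat.cast_zero, zero_mul,
    Real.zero_rpow (sub_ne_zero.2 (Ne.symm hα)), zero_add, Nat.cast_one, one_mul, sub_zero,
    Real.rpow_sub hτ, Real.rpow_one]
  field_simp

/-- The truncated subtraction `j - s` makes the weight constant for `s ≥ j`. -/
lemma caputoWeight_monotone (hα₀ : 0 ≤ α) (hα₁ : α ≤ 1) (hτ : 0 ≤ τ) (j : ℕ) :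
    Monotone (caputoWeight α τ j) := by
  refine monotone_nat_of_le_succ fun s => ?_
  rcases lt_or_ge s j with hs | hs
  · obtain ⟨m, hm⟩ : ∃ m, j - s = m + 1 := ⟨j - (s + 1), by omega⟩
    have hm' : j - (s + 1) = m := by omega
    have hinc := Real.rpow_add_two_mul_sub_rpow_le (by linarith : 0 ≤ 1 - α) (by linarith)
      (by positivity : 0 ≤ (m : ℝ) * τ) hτ
    rw [caputoWeight, caputoWeight, hm, hm']
    push_cast
    rw [show ((m : ℝ) + 1 + 1) * τ = m * τ + 2 * τ by ring,
      show ((m : ℝ) + 1) * τ = m * τ + τ by ring]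
    exact div_le_div_of_nonneg_right hinc hτ
  · rw [caputoWeight, caputoWeight, Nat.sub_eq_zero_of_le hs, Nat.sub_eq_zero_of_le (by omega)]

end CaputoWeight

/-- Lemma 2, inequality (22):
`y^{j+1} Δ^α y ≥ (1/2) Δ^α(y²) + (τ^α Γ(2-α)/2) (Δ^α y)²`. -/
theorem discrete_caputo_ineq_upper (α τ : ℝ) (hα0 : 0 < α) (hα1 : α < 1)
    (hτ : 0 < τ) (y : ℕ → ℝ) :
    ∀ j : ℕ,
      y (j + 1) * dCaputo α τ y j ≥
        (1 / 2) * dCaputo α τ (fun n => (y n) ^ 2) j +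
          (τ ^ α * Real.Gamma (2 - α) / 2) * (dCaputo α τ y j) ^ 2 := by
  intro j
  have hΓ : 0 < Real.Gamma (2 - α) := Real.Gamma_pos_of_pos (by linarith)
  have hkey := sq_sum_div_le_of_monotone (caputoWeight α τ j) y (caputoWeight_pos hα1 hτ j 0)
    (caputoWeight_monotone hα0.le hα1.le hτ.le j) j
  rw [caputoWeight_self hα1.ne hτ] at hkey
  rw [dCaputo_eq_inv_gamma_mul_sum, dCaputo_eq_inv_gamma_mul_sum]
  set S := ∑ s ∈ range (j + 1), caputoWeight α τ j s * (y (s + 1) - y s)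
  have hsq : τ ^ α * Real.Gamma (2 - α) / 2 * ((Real.Gamma (2 - α))⁻¹ * S) ^ 2 =
      (Real.Gamma (2 - α))⁻¹ * (S ^ 2 / (2 * (τ ^ α)⁻¹)) := by
    field_simp
  rw [hsq]
  linarith [mul_le_mul_of_nonneg_left hkey (inv_nonneg.2 hΓ.le)]
end

section
/- Let 0 < α < 1, τ > 0, 0 ≤ σ ≤ 1, and let y : ℕ → ℝ be any sequence (a grid function on the grid t_j = jτ). Then for every j ≥ 0: (σ y^{j+1} + (1−σ) y^{j}) · Δ_{0t_j}^α y ≥ (1/2) · Δ_{0t_j}^α (y²) + (τ^α Γ(2−α)/(2(2 − 2^{1−α}))) · ((3 − 2^{1−α})σ − 1) · (Δ_{0t_j}^α y)², where Δ_{0t_j}^α (y²) denotes the same discrete operator applied to the sequence j ↦ (y^j)². -/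
open Finset

namespace DiscreteCaputo

section Convolution

variable (b : ℕ → ℝ)

def convDiff (v : ℕ → ℝ) (j : ℕ) : ℝ :=
  ∑ s ∈ range (j + 1), b (j - s) * (v (s + 1) - v s)

def abelWeight (j s : ℕ) : ℝ :=
  b (j - s) - if s = 0 then 0 else b (j - (s - 1))

lemma sum_mul_sub_succ_eq (w : ℕ → ℝ) (n : ℕ) :
    ∑ s ∈ range (n + 1), b s * (w s - w (s + 1)) =
      ∑ s ∈ range (n + 1), (b s - if s = 0 then 0 else b (s - 1)) * w s - b n * w (n + 1) := by
  induction n with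
  | zero => simp [mul_sub]
  | succ n ih =>
    rw [sum_range_succ, ih, sum_range_succ _ (n + 1), if_neg n.succ_ne_zero,
      Nat.add_sub_cancel]
    ring

lemma convDiff_eq_sum_abelWeight (v : ℕ → ℝ) (j : ℕ) :
    convDiff b v j = ∑ s ∈ range (j + 1), abelWeight b j s * (v (j + 1) - v s) := by
  have h := sum_mul_sub_succ_eq (fun s => b (j - s)) (fun s => v (j + 1) - v s) j
  simp only [sub_self, mul_zero, sub_zero, sub_sub_sub_cancel_left] at h
  exact h

lemma sum_abelWeight (j : ℕ) : ∑ s ∈ range (j + 1), abelWeight b j s = b 0 := by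
  have h := sum_mul_sub_succ_eq (fun s => b (j - s)) (fun _ => 1) j
  simp only [sub_self, mul_zero, mul_one, sum_const_zero, Nat.sub_self] at h
  exact sub_eq_zero.1 h.symm

lemma convDiff_sq_eq (v : ℕ → ℝ) (j : ℕ) :
    convDiff b (fun n => v n ^ 2) j =
      2 * v (j + 1) * ∑ s ∈ range (j + 1), abelWeight b j s * (v (j + 1) - v s) -
        ∑ s ∈ range (j + 1), abelWeight b j s * (v (j + 1) - v s) ^ 2 := by
  rw [convDiff_eq_sum_abelWeight, mul_sum, ← sum_sub_distrib]
  exact sum_congr rfl fun s _ => by ring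

variable {b}

lemma abelWeight_nonneg (hb : Antitone b) (hb0 : ∀ k, 0 ≤ b k) (j s : ℕ) :
    0 ≤ abelWeight b j s := by
  unfold abelWeight
  split_ifs
  · simpa using hb0 _
  · exact sub_nonneg.2 (hb (by omega))

lemma sub_le_abelWeight_self (hb1 : 0 ≤ b 1) (j : ℕ) : b 0 - b 1 ≤ abelWeight b j j := by
  unfold abelWeight
  split_ifs with hj
  · simpa using hb1
  · rw [Nat.sub_self, show j - (j - 1) = 1 by omega]

end Convolution

lemma mul_sq_le_half_sub {M c P Q d σ : ℝ} (hM : 0 ≤ M) (hc : 0 < c) (hσ0 : 0 ≤ σ)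
    (hσ1 : σ ≤ 1) (hPQ : P ^ 2 ≤ M * Q) (hdQ : c * M * d ^ 2 ≤ Q) :
    ((1 + c) * σ - 1) / (2 * c * M) * P ^ 2 ≤ Q / 2 - (1 - σ) * d * P := by
  rcases hM.eq_or_lt with rfl | hM
  · have hQ : 0 ≤ Q := by simpa using hdQ
    have hP : P = 0 := pow_eq_zero_iff two_ne_zero |>.1 (by nlinarith [sq_nonneg P])
    simp only [hP, mul_zero, div_zero, zero_mul, sub_zero]
    linarith
  · rw [div_mul_eq_mul_div, div_le_iff₀ (by positivity)]
    have hcM : 0 ≤ c * M := by positivity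
    nlinarith [mul_nonneg (mul_nonneg hσ0 hc.le) (sub_nonneg.2 hPQ),
      mul_nonneg (sub_nonneg.2 hσ1) (mul_nonneg hcM (sub_nonneg.2 hdQ)),
      mul_nonneg (sub_nonneg.2 hσ1) (sq_nonneg (c * M * d - P))]

theorem convDiff_energy_le {b : ℕ → ℝ} (hb : Antitone b) (hb0 : ∀ k, 0 ≤ b k) {c : ℝ}
    (hc : 0 < c) (hb01 : c * b 0 ≤ b 0 - b 1) {σ : ℝ} (hσ0 : 0 ≤ σ) (hσ1 : σ ≤ 1)
    (v : ℕ → ℝ) (j : ℕ) :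
    1 / 2 * convDiff b (fun n => v n ^ 2) j +
        ((1 + c) * σ - 1) / (2 * c * b 0) * convDiff b v j ^ 2 ≤
      (σ * v (j + 1) + (1 - σ) * v j) * convDiff b v j := by
  have hμ := fun s (_ : s ∈ range (j + 1)) => abelWeight_nonneg hb hb0 j s
  set P := ∑ s ∈ range (j + 1), abelWeight b j s * (v (j + 1) - v s)
  set Q := ∑ s ∈ range (j + 1), abelWeight b j s * (v (j + 1) - v s) ^ 2
  have hPQ : P ^ 2 ≤ b 0 * Q := by
    rw [← sum_abelWeight b j]
    exact sum_sq_le_sum_mul_sum_of_sq_le_mul _ hμ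
      (fun s hs => mul_nonneg (hμ s hs) (sq_nonneg _)) fun s _ => le_of_eq (by ring)
  have hdQ : c * b 0 * (v (j + 1) - v j) ^ 2 ≤ Q :=
    calc c * b 0 * (v (j + 1) - v j) ^ 2
        ≤ abelWeight b j j * (v (j + 1) - v j) ^ 2 := by
          gcongr
          exact hb01.trans (sub_le_abelWeight_self (hb0 1) j)
      _ ≤ Q := single_le_sum (f := fun s => abelWeight b j s * (v (j + 1) - v s) ^ 2)
          (fun s hs => mul_nonneg (hμ s hs) (sq_nonneg _)) (self_mem_range_succ j)
  have := mul_sq_le_half_sub (hb0 0) hc hσ0 hσ1 hPQ hdQ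
  rw [convDiff_sq_eq, convDiff_eq_sum_abelWeight]
  linarith

lemma antitone_increments_of_concaveOn {f : ℝ → ℝ} (hf : ConcaveOn ℝ (Set.Ici 0) f)
    {h : ℝ} (hh : 0 ≤ h) :
    Antitone fun k : ℕ => f (((k + 1 : ℕ) : ℝ) * h) - f ((k : ℝ) * h) := by
  refine antitone_nat_of_succ_le fun n => ?_
  have hmid := hf.2 (Set.mem_Ici.2 (by positivity : (0 : ℝ) ≤ n * h))
    (Set.mem_Ici.2 (by positivity : (0 : ℝ) ≤ (n + 2) * h))
    (by norm_num : (0 : ℝ) ≤ 1 / 2) (by norm_num : (0 : ℝ) ≤ 1 / 2) (by norm_num)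
  rw [smul_eq_mul, smul_eq_mul, smul_eq_mul, smul_eq_mul,
    show 1 / 2 * ((n : ℝ) * h) + 1 / 2 * ((n + 2) * h) = (n + 1) * h by ring] at hmid
  push_cast
  rw [show ((n : ℝ) + 1 + 1) * h = (n + 2) * h by ring]
  linarith

noncomputable def caputoKernel (α τ : ℝ) (k : ℕ) : ℝ :=
  (((k + 1 : ℕ) : ℝ) * τ) ^ (1 - α) - (((k : ℕ) : ℝ) * τ) ^ (1 - α)

variable {α τ : ℝ}

lemma caputoKernel_antitone (hα0 : 0 ≤ α) (hα1 : α ≤ 1) (hτ : 0 ≤ τ) :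
    Antitone (caputoKernel α τ) :=
  antitone_increments_of_concaveOn (Real.concaveOn_rpow (by linarith) (by linarith)) hτ

lemma caputoKernel_nonneg (hα1 : α ≤ 1) (hτ : 0 ≤ τ) (k : ℕ) :
    0 ≤ caputoKernel α τ k :=
  sub_nonneg.2 <| Real.rpow_le_rpow (by positivity) (by gcongr; simp) (by linarith)

lemma caputoKernel_zero (hα1 : α < 1) : caputoKernel α τ 0 = τ ^ (1 - α) := by
  simp [caputoKernel, Real.zero_rpow (by linarith : (1 - α) ≠ 0)]

lemma caputoKernel_zero_sub_one (hα1 : α < 1) (hτ : 0 ≤ τ) :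
    caputoKernel α τ 0 - caputoKernel α τ 1 = (2 - 2 ^ (1 - α)) * caputoKernel α τ 0 := by
  rw [caputoKernel_zero hα1, caputoKernel, Nat.cast_one, one_mul, Real.mul_rpow (by norm_num) hτ]
  norm_num
  ring

lemma two_sub_two_rpow_pos (hα0 : 0 < α) : 0 < 2 - (2 : ℝ) ^ (1 - α) := by
  have : (2 : ℝ) ^ (1 - α) < 2 ^ (1 : ℝ) :=
    Real.rpow_lt_rpow_of_exponent_lt one_lt_two (by linarith)
  rw [Real.rpow_one] at this
  linarith

lemma dCaputo_eq_convDiff (α τ : ℝ) (v : ℕ → ℝ) (j : ℕ) :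
    dCaputo α τ v j = convDiff (caputoKernel α τ) v j / (Real.Gamma (2 - α) * τ) := by
  rw [dCaputo, convDiff, ← sum_div, div_mul_eq_div_div_swap, one_div_mul_eq_div]
  rfl

end DiscreteCaputo

open DiscreteCaputo

/-- Corollary 2, inequality (26): for `0 ≤ σ ≤ 1`,
`(σ y^{j+1} + (1-σ) y^j) Δ^α y ≥ (1/2) Δ^α(y²) +
  (τ^α Γ(2-α)/(2(2 − 2^{1-α}))) ((3 − 2^{1-α})σ − 1) (Δ^α y)²`. -/
theorem discrete_caputo_ineq_sigma (α τ σ : ℝ) (hα0 : 0 < α) (hα1 : α < 1)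
    (hτ : 0 < τ) (hσ0 : 0 ≤ σ) (hσ1 : σ ≤ 1) (y : ℕ → ℝ) :
    ∀ j : ℕ,
      (σ * y (j + 1) + (1 - σ) * y j) * dCaputo α τ y j ≥
        (1 / 2) * dCaputo α τ (fun n => (y n) ^ 2) j +
          (τ ^ α * Real.Gamma (2 - α) / (2 * (2 - 2 ^ (1 - α)))) *
            ((3 - 2 ^ (1 - α)) * σ - 1) * (dCaputo α τ y j) ^ 2 := by
  intro j
  have key := convDiff_energy_le (caputoKernel_antitone hα0.le hα1.le hτ.le)
    (caputoKernel_nonneg hα1.le hτ.le) (two_sub_two_rpow_pos hα0)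
    (caputoKernel_zero_sub_one hα1 hτ.le).ge hσ0 hσ1 y j
  rw [caputoKernel_zero hα1] at key
  have hK : 0 < Real.Gamma (2 - α) * τ := mul_pos (Real.Gamma_pos_of_pos (by linarith)) hτ
  have hM : τ ^ (1 - α) ≠ 0 := (Real.rpow_pos_of_pos hτ _).ne'
  have hτα : τ ^ α = τ / τ ^ (1 - α) := by
    rw [eq_div_iff hM, ← Real.rpow_add hτ, add_sub_cancel, Real.rpow_one]
  simp only [dCaputo_eq_convDiff, ge_iff_le]
  refine ((div_le_div_of_nonneg_right key hK.le).trans_eq (mul_div_assoc ..)).trans_eq' ?_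
  rw [hτα, show (3 : ℝ) - 2 ^ (1 - α) = 1 + (2 - 2 ^ (1 - α)) by ring]
  field_simp
end
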